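/- Let p_1, …, p_n be pairwise distinct primes with 2^(η-1) ≤ p_i for all i, let x_0 = ∏_{i=1}^n p_i and p̂_i = x_0/p_i, and let P̂ be an integer with P̂ ≡ p̂_k (mod p_k) for every k. Suppose a, b, c are integers with a ≡ a_k (mod p_k), b ≡ b_k (mod p_k), c ≡ c_k (mod p_k), where |a_k|, |b_k|, |c_k| < 2^ε for every k, and suppose n·2^(3ε+1) ≤ 2^(η-1). Then a·b·c·P̂ ≡ ∑_{k=1}^n a_k·b_k·c_k·p̂_k (mod x_0), and |∑_{k=1}^n a_k·b_k·c_k·p̂_k| < x_0/2, so this sum is the unique representative of a·b·c·P̂ mod x_0 in the interval (−x_0/2, x_0/2]. -/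

import Mathlib

/-!
Since `p̂_l = ∏_{j ≠ l} p_j`, the prime `p_k` divides every `p̂_l` with `l ≠ k`, so modulo `p_k`
both `a·b·c·P̂` and the sum reduce to `a_k b_k c_k p̂_k`; the primes being pairwise coprime, the
congruences lift to `x_0`. Each term is bounded by `(2^ε - 1)^3 p̂_k ≤ (2^ε - 1)^3 x_0 / 2^(η-1)`,
so twice the sum is below `n · 2^(3ε+1) x_0 / 2^(η-1) ≤ x_0`. Finally, two integers congruent
modulo `x_0` and both in `(-x_0/2, x_0/2]` coincide.
-/

open Finset Function

lemma Int.isCoprime_of_prime_of_ne {p q : ℤ} (hp : Prime p) (hq : Prime q)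
    (hp0 : 0 ≤ p) (hq0 : 0 ≤ q) (hne : p ≠ q) : IsCoprime p q :=
  hp.coprime_iff_not_dvd.2 fun h ↦
    hne (Int.eq_of_associated_of_nonneg (hp.associated_of_dvd hq h) hp0 hq0)

lemma Int.modEq_sum_mul_prod_erase {ι : Type*} [Fintype ι] [DecidableEq ι] {p : ι → ℤ}
    (hp : Pairwise (IsCoprime on p)) {y : ℤ} {t : ι → ℤ}
    (h : ∀ k, y ≡ t k * ∏ j ∈ univ.erase k, p j [ZMOD p k]) :
    y ≡ ∑ k, t k * ∏ j ∈ univ.erase k, p j [ZMOD ∏ k, p k] := by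
  refine (Int.modEq_iff_dvd.2 <| Fintype.prod_dvd_of_coprime hp fun k ↦ ?_).symm
  have hother : p k ∣ ∑ l ∈ univ.erase k, t l * ∏ j ∈ univ.erase l, p j :=
    dvd_sum fun l hl ↦ Dvd.dvd.mul_left
      (dvd_prod_of_mem p (mem_erase.2 ⟨fun h ↦ (mem_erase.1 hl).1 h.symm, mem_univ k⟩)) _
  rw [← add_sum_erase _ _ (mem_univ k)]
  convert (dvd_neg.2 (h k).dvd).sub hother using 1
  ring

lemma abs_mul_mul_lt_pow_three {R : Type*} [CommRing R] [LinearOrder R] [IsStrictOrderedRing R]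
    {a b c B : R} (ha : |a| < B) (hb : |b| < B) (hc : |c| < B) : |a * b * c| < B ^ 3 := by
  rw [abs_mul, abs_mul, pow_three']
  exact mul_lt_mul'' (mul_lt_mul'' ha hb (abs_nonneg _) (abs_nonneg _)) hc
    (by positivity) (abs_nonneg _)

lemma abs_sum_mul_mul_le {ι R : Type*} [CommRing R] [LinearOrder R] [IsStrictOrderedRing R]
    (s : Finset ι) {t q : ι → R} {M x L : R} (ht : ∀ k, |t k| ≤ M) (hq0 : ∀ k, 0 ≤ q k)
    (hq : ∀ k, q k * L ≤ x) (hL : 0 ≤ L) :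
    |∑ k ∈ s, t k * q k| * L ≤ #s * M * x := by
  have hterm : ∀ k, |t k * q k| * L ≤ M * x := fun k ↦ by
    rw [abs_mul, abs_of_nonneg (hq0 k), mul_assoc]
    exact mul_le_mul (ht k) (hq k) (mul_nonneg (hq0 k) hL) ((abs_nonneg _).trans (ht k))
  calc |∑ k ∈ s, t k * q k| * L ≤ ∑ k ∈ s, |t k * q k| * L := by
        rw [← sum_mul]; exact mul_le_mul_of_nonneg_right (abs_sum_le_sum_abs _ _) hL
    _ ≤ ∑ _k ∈ s, M * x := sum_le_sum fun k _ ↦ hterm k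
    _ = #s * M * x := by rw [sum_const, nsmul_eq_mul, mul_assoc]

lemma Int.two_mul_abs_sum_mul_lt {ι : Type*} (s : Finset ι) {t q : ι → ℤ} {B x L : ℤ}
    (ht : ∀ k, |t k| < B) (hq0 : ∀ k, 0 ≤ q k) (hq : ∀ k, q k * L ≤ x) (hx : 0 < x)
    (hL : 0 < L) (hBL : #s * (2 * B) ≤ L) : 2 * |∑ k ∈ s, t k * q k| < x := by
  have hsum := abs_sum_mul_mul_le s (fun k ↦ Int.le_sub_one_of_lt (ht k)) hq0 hq hL.le
  have hsmall : 2 * #s * (B - 1) < L := by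
    rcases (#s).eq_zero_or_pos with hs | hs
    · simpa [hs] using hL
    · have : (1 : ℤ) ≤ #s := by exact_mod_cast hs
      linarith
  refine lt_of_mul_lt_mul_right ?_ hL.le
  calc 2 * |∑ k ∈ s, t k * q k| * L ≤ 2 * #s * (B - 1) * x := by linarith
    _ < L * x := mul_lt_mul_of_pos_right hsmall hx
    _ = x * L := mul_comm _ _

lemma Int.eq_of_modEq_of_two_mul_le {x m s : ℤ} (h : m ≡ s [ZMOD x]) (hm₁ : -x < 2 * m)
    (hm₂ : 2 * m ≤ x) (hs : 2 * |s| < x) : m = s := by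
  have hlt : |s - m| < x := by
    rw [abs_lt]
    constructor <;> linarith [neg_abs_le s, le_abs_self s]
  linarith [Int.eq_zero_of_abs_lt_dvd h.dvd hlt]

/-- Triple-product form of the CRT-ACD lemma from the CHLRS15 zeroizing attack:
with pairwise distinct η-bit primes `p k`, product `x0`, `phat k = x0 / p k`,
auxiliary `P ≡ phat k (mod p k)`, and samples `a ≡ aa k`, `b ≡ bb k`,
`c ≡ cc k (mod p k)` all with residues `< 2^ε` in absolute value, if
`n * 2^(3ε+1) ≤ 2^(η-1)` then `a*b*c*P ≡ ∑ k, aa k * bb k * cc k * phat k (mod x0)`,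
the sum lies in `(-x0/2, x0/2]`, and it is the unique such representative. -/
theorem clt_crt_acd_triple (n η ε : ℕ) (p : Fin n → ℤ)
    (hp : ∀ k, Prime (p k))
    (hdist : ∀ k l : Fin n, k ≠ l → p k ≠ p l)
    (hsize : ∀ k, (2 : ℤ) ^ (η - 1) ≤ p k)
    (x0 : ℤ) (hx0 : x0 = ∏ k, p k)
    (phat : Fin n → ℤ) (hphat : ∀ k, phat k = x0 / p k)
    (P : ℤ) (hP : ∀ k, P ≡ phat k [ZMOD p k])
    (a b c : ℤ) (aa bb cc : Fin n → ℤ)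
    (haa : ∀ k, a ≡ aa k [ZMOD p k])
    (hbb : ∀ k, b ≡ bb k [ZMOD p k])
    (hcc : ∀ k, c ≡ cc k [ZMOD p k])
    (hsa : ∀ k, |aa k| < 2 ^ ε) (hsb : ∀ k, |bb k| < 2 ^ ε)
    (hsc : ∀ k, |cc k| < 2 ^ ε)
    (hparam : (n : ℤ) * 2 ^ (3 * ε + 1) ≤ 2 ^ (η - 1)) :
    (a * b * c * P ≡ ∑ k, aa k * bb k * cc k * phat k [ZMOD x0]) ∧
    2 * |∑ k, aa k * bb k * cc k * phat k| < x0 ∧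
    ∀ m : ℤ, a * b * c * P ≡ m [ZMOD x0] → -x0 < 2 * m → 2 * m ≤ x0 →
      m = ∑ k, aa k * bb k * cc k * phat k := by
  have hpos : ∀ k, 0 < p k := fun k ↦ (by positivity : (0 : ℤ) < 2 ^ (η - 1)).trans_le (hsize k)
  have hphat_eq : ∀ k, phat k = ∏ j ∈ univ.erase k, p j := fun k ↦ by
    rw [hphat, hx0, ← prod_erase_mul _ _ (mem_univ k), Int.mul_ediv_cancel _ (hpos k).ne']
  have hphat_mul : ∀ k, phat k * p k = x0 := fun k ↦ by
    rw [hphat_eq, hx0, prod_erase_mul _ _ (mem_univ k)]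
  have hcop : Pairwise (IsCoprime on p) := fun k l hkl ↦
    Int.isCoprime_of_prime_of_ne (hp k) (hp l) (hpos k).le (hpos l).le (hdist k l hkl)
  have hcong : a * b * c * P ≡ ∑ k, aa k * bb k * cc k * phat k [ZMOD x0] := by
    simp only [hx0, hphat_eq]
    exact Int.modEq_sum_mul_prod_erase hcop fun k ↦
      hphat_eq k ▸ (((haa k).mul (hbb k)).mul (hcc k)).mul (hP k)
  have hx0pos : 0 < x0 := hx0 ▸ prod_pos fun k _ ↦ hpos k
  have hphat_pos : ∀ k, 0 < phat k := fun k ↦ hphat_eq k ▸ prod_pos fun j _ ↦ hpos j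
  have hcube : ∀ k, |aa k * bb k * cc k| < 2 ^ (3 * ε) := fun k ↦
    pow_mul' (2 : ℤ) 3 ε ▸ abs_mul_mul_lt_pow_three (hsa k) (hsb k) (hsc k)
  have hbound : 2 * |∑ k, aa k * bb k * cc k * phat k| < x0 :=
    Int.two_mul_abs_sum_mul_lt univ hcube (fun k ↦ (hphat_pos k).le)
      (fun k ↦ hphat_mul k ▸ mul_le_mul_of_nonneg_left (hsize k) (hphat_pos k).le) hx0pos
      (by positivity) (by rwa [card_fin, ← pow_succ'])
  exact ⟨hcong, hbound, fun m hm hm₁ hm₂ ↦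
    Int.eq_of_modEq_of_two_mul_le (hm.symm.trans hcong) hm₁ hm₂ hbound⟩
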